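/- Let Ω ⊆ ℝ² be open and let v : Ω → ℝ be a smooth function of (x,t) satisfying v_t = v_{xxx} + (3/2)·(v_x)² on Ω. Then the function u = 3·v_x satisfies the KdV equation u_t = u_{xxx} + u·u_x on Ω. -/

import Mathlib

/-- Partial derivative in the first (space) variable. -/
noncomputable def pdx (f : ℝ → ℝ → ℝ) : ℝ → ℝ → ℝ :=
  fun x t => deriv (fun y => f y t) x

/-- Partial derivative in the second (time) variable. -/
noncomputable def pdt (f : ℝ → ℝ → ℝ) : ℝ → ℝ → ℝ :=
  fun x t => deriv (fun s => f x s) t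


/-- pdx of a function agreeing with smooth `F` on open `Ω` equals directional derivative. -/
lemma pdx_eq_fderiv {Ω : Set (ℝ × ℝ)} (hΩ : IsOpen Ω) {F : ℝ × ℝ → ℝ}
    (hF : ContDiffOn ℝ (⊤ : ℕ∞) F Ω) {g : ℝ → ℝ → ℝ} (hg : ∀ p ∈ Ω, g p.1 p.2 = F p)
    {p : ℝ × ℝ} (hp : p ∈ Ω) : pdx g p.1 p.2 = fderiv ℝ F p (1, 0) := by
  obtain ⟨x, t⟩ := p
  have hd : DifferentiableAt ℝ F (x, t) :=
    (hF.contDiffAt (hΩ.mem_nhds hp)).differentiableAt (by simp)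
  have hcurve : HasDerivAt (fun y : ℝ => ((y, t) : ℝ × ℝ)) (1, 0) x :=
    HasDerivAt.prodMk (hasDerivAt_id x) (hasDerivAt_const x t)
  have h2 : HasDerivAt (fun y => F (y, t)) (fderiv ℝ F (x, t) (1, 0)) x :=
    hd.hasFDerivAt.comp_hasDerivAt x hcurve
  have hev : (fun y => g y t) =ᶠ[nhds x] fun y => F (y, t) := by
    have hmem : ∀ᶠ y in nhds x, ((y, t) : ℝ × ℝ) ∈ Ω := by
      have hc : ContinuousAt (fun y : ℝ => ((y, t) : ℝ × ℝ)) x := by fun_prop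
      exact hc.preimage_mem_nhds (hΩ.mem_nhds hp)
    filter_upwards [hmem] with y hy using hg (y, t) hy
  show deriv (fun y => g y t) x = _
  rw [hev.deriv_eq]
  exact h2.deriv

lemma pdt_eq_fderiv {Ω : Set (ℝ × ℝ)} (hΩ : IsOpen Ω) {F : ℝ × ℝ → ℝ}
    (hF : ContDiffOn ℝ (⊤ : ℕ∞) F Ω) {g : ℝ → ℝ → ℝ} (hg : ∀ p ∈ Ω, g p.1 p.2 = F p)
    {p : ℝ × ℝ} (hp : p ∈ Ω) : pdt g p.1 p.2 = fderiv ℝ F p (0, 1) := by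
  obtain ⟨x, t⟩ := p
  have hd : DifferentiableAt ℝ F (x, t) :=
    (hF.contDiffAt (hΩ.mem_nhds hp)).differentiableAt (by simp)
  have hcurve : HasDerivAt (fun s : ℝ => ((x, s) : ℝ × ℝ)) (0, 1) t :=
    HasDerivAt.prodMk (hasDerivAt_const t x) (hasDerivAt_id t)
  have h2 : HasDerivAt (fun s => F (x, s)) (fderiv ℝ F (x, t) (0, 1)) t :=
    hd.hasFDerivAt.comp_hasDerivAt t hcurve
  have hev : (fun s => g x s) =ᶠ[nhds t] fun s => F (x, s) := by
    have hmem : ∀ᶠ s in nhds t, ((x, s) : ℝ × ℝ) ∈ Ω := by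
      have hc : ContinuousAt (fun s : ℝ => ((x, s) : ℝ × ℝ)) t := by fun_prop
      exact hc.preimage_mem_nhds (hΩ.mem_nhds hp)
    filter_upwards [hmem] with s hs using hg (x, s) hs
  show deriv (fun s => g x s) t = _
  rw [hev.deriv_eq]
  exact h2.deriv

lemma fderiv_contDiffOn {Ω : Set (ℝ × ℝ)} (hΩ : IsOpen Ω) {F : ℝ × ℝ → ℝ}
    (hF : ContDiffOn ℝ (⊤ : ℕ∞) F Ω) : ContDiffOn ℝ (⊤ : ℕ∞) (fderiv ℝ F) Ω := by
  refine hF.fderiv_of_isOpen hΩ ?_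
  exact (by simp)

lemma fderiv_apply_contDiffOn {Ω : Set (ℝ × ℝ)} (hΩ : IsOpen Ω) {F : ℝ × ℝ → ℝ}
    (hF : ContDiffOn ℝ (⊤ : ℕ∞) F Ω) (e : ℝ × ℝ) :
    ContDiffOn ℝ (⊤ : ℕ∞) (fun p => fderiv ℝ F p e) Ω :=
  (ContinuousLinearMap.apply ℝ ℝ e).contDiff.comp_contDiffOn (fderiv_contDiffOn hΩ hF)

lemma fderiv_apply_symm {Ω : Set (ℝ × ℝ)} (hΩ : IsOpen Ω) {F : ℝ × ℝ → ℝ}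
    (hF : ContDiffOn ℝ (⊤ : ℕ∞) F Ω) {p : ℝ × ℝ} (hp : p ∈ Ω) (a b : ℝ × ℝ) :
    fderiv ℝ (fun q => fderiv ℝ F q a) p b = fderiv ℝ (fun q => fderiv ℝ F q b) p a := by
  have h1 : ContDiffOn ℝ (⊤ : ℕ∞) (fderiv ℝ F) Ω := fderiv_contDiffOn hΩ hF
  have hd : DifferentiableAt ℝ (fderiv ℝ F) p :=
    (h1.contDiffAt (hΩ.mem_nhds hp)).differentiableAt (by simp)
  have hfa : HasFDerivAt (fun q => fderiv ℝ F q a)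
      ((ContinuousLinearMap.apply ℝ ℝ a).comp (fderiv ℝ (fderiv ℝ F) p)) p :=
    ((ContinuousLinearMap.apply ℝ ℝ a).hasFDerivAt).comp p hd.hasFDerivAt
  have hfb : HasFDerivAt (fun q => fderiv ℝ F q b)
      ((ContinuousLinearMap.apply ℝ ℝ b).comp (fderiv ℝ (fderiv ℝ F) p)) p :=
    ((ContinuousLinearMap.apply ℝ ℝ b).hasFDerivAt).comp p hd.hasFDerivAt
  rw [hfa.fderiv, hfb.fderiv]
  simp only [ContinuousLinearMap.coe_comp', Function.comp_apply,
    ContinuousLinearMap.apply_apply]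
  have hev : ∀ᶠ y in nhds p, HasFDerivAt F (fderiv ℝ F y) y := by
    filter_upwards [hΩ.mem_nhds hp] with q hq using
      ((hF.contDiffAt (hΩ.mem_nhds hq)).differentiableAt (by simp)).hasFDerivAt
  exact second_derivative_symmetric_of_eventually hev hd.hasFDerivAt b a
/-- Example in Section 4.2: if `v` is smooth on an open `Ω ⊆ ℝ²` and satisfies
`v_t = v_xxx + (3/2)(v_x)²` there, then `u = 3 v_x` satisfies the KdV equation
`u_t = u_xxx + u u_x` on `Ω`. -/
theorem stmt9 (Ω : Set (ℝ × ℝ)) (hΩ : IsOpen Ω) (v : ℝ → ℝ → ℝ)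
    (hv : ContDiffOn ℝ (⊤ : ℕ∞) (fun p : ℝ × ℝ => v p.1 p.2) Ω)
    (hveq : ∀ p ∈ Ω, pdt v p.1 p.2
      = pdx^[3] v p.1 p.2 + (3 / 2) * (pdx v p.1 p.2) ^ 2)
    (u : ℝ → ℝ → ℝ) (hu : ∀ x t, u x t = 3 * pdx v x t) :
    ∀ p ∈ Ω, pdt u p.1 p.2 = pdx^[3] u p.1 p.2 + u p.1 p.2 * pdx u p.1 p.2 := by
  set V : ℝ × ℝ → ℝ := fun p => v p.1 p.2 with hV
  set F1 : ℝ × ℝ → ℝ := fun p => fderiv ℝ V p (1, 0) with hF1def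
  set F2 : ℝ × ℝ → ℝ := fun p => fderiv ℝ F1 p (1, 0) with hF2def
  set F3 : ℝ × ℝ → ℝ := fun p => fderiv ℝ F2 p (1, 0) with hF3def
  set F4 : ℝ × ℝ → ℝ := fun p => fderiv ℝ F3 p (1, 0) with hF4def
  have hF1 : ContDiffOn ℝ (⊤ : ℕ∞) F1 Ω := fderiv_apply_contDiffOn hΩ hv _
  have hF2 : ContDiffOn ℝ (⊤ : ℕ∞) F2 Ω := fderiv_apply_contDiffOn hΩ hF1 _
  have hF3 : ContDiffOn ℝ (⊤ : ℕ∞) F3 Ω := fderiv_apply_contDiffOn hΩ hF2 _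
  have e1 : ∀ p ∈ Ω, pdx v p.1 p.2 = F1 p := fun p hp =>
    pdx_eq_fderiv hΩ hv (fun _ _ => rfl) hp
  have e2 : ∀ p ∈ Ω, pdx (pdx v) p.1 p.2 = F2 p := fun p hp =>
    pdx_eq_fderiv hΩ hF1 e1 hp
  have e3 : ∀ p ∈ Ω, pdx (pdx (pdx v)) p.1 p.2 = F3 p := fun p hp =>
    pdx_eq_fderiv hΩ hF2 e2 hp
  -- main point
  intro p hp
  obtain ⟨x, t⟩ := p
  -- reduce u-derivatives to v-derivatives
  have hux : ∀ y s, pdx u y s = 3 * pdx (pdx v) y s := by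
    intro y s
    show deriv (fun z => u z s) y = _
    rw [show (fun z => u z s) = fun z => 3 * pdx v z s from funext fun z => hu z s,
      deriv_const_mul_field]
    rfl
  have hux2 : ∀ y s, pdx (pdx u) y s = 3 * pdx (pdx (pdx v)) y s := by
    intro y s
    show deriv (fun z => pdx u z s) y = _
    rw [show (fun z => pdx u z s) = fun z => 3 * pdx (pdx v) z s from
      funext fun z => hux z s, deriv_const_mul_field]
    rfl
  have hux3 : ∀ y s, pdx (pdx (pdx u)) y s = 3 * pdx (pdx (pdx (pdx v))) y s := by
    intro y s
    show deriv (fun z => pdx (pdx u) z s) y = _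
    rw [show (fun z => pdx (pdx u) z s) = fun z => 3 * pdx (pdx (pdx v)) z s from
      funext fun z => hux2 z s, deriv_const_mul_field]
    rfl
  have hut : pdt u x t = 3 * pdt (pdx v) x t := by
    show deriv (fun s => u x s) t = _
    rw [show (fun s => u x s) = fun s => 3 * pdx v x s from funext fun s => hu x s,
      deriv_const_mul_field]
    rfl
  -- the mixed derivative
  have hmix : pdt (pdx v) x t = fderiv ℝ F1 (x, t) (0, 1) :=
    pdt_eq_fderiv hΩ hF1 e1 hp
  have hsymm : fderiv ℝ F1 (x, t) (0, 1)
      = fderiv ℝ (fun q => fderiv ℝ V q (0, 1)) (x, t) (1, 0) := by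
    rw [hF1def]
    exact fderiv_apply_symm hΩ hv hp (1, 0) (0, 1)
  -- the time derivative function agrees with H on Ω
  set H : ℝ × ℝ → ℝ := fun q => F3 q + (3 / 2) * (F1 q * F1 q) with hHdef
  have hagree : (fun q => fderiv ℝ V q (0, 1)) =ᶠ[nhds (x, t)] H := by
    filter_upwards [hΩ.mem_nhds hp] with q hq
    have h1 : fderiv ℝ V q (0, 1) = pdt v q.1 q.2 :=
      (pdt_eq_fderiv hΩ hv (fun _ _ => rfl) hq).symm
    have h2 := hveq q hq
    have h3 : pdx^[3] v q.1 q.2 = pdx (pdx (pdx v)) q.1 q.2 := rfl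
    rw [h1, h2, h3, e3 q hq, hHdef]
    rw [e1 q hq]
    ring
  -- differentiate H
  have hd3 : HasFDerivAt F3 (fderiv ℝ F3 (x, t)) (x, t) :=
    ((hF3.contDiffAt (hΩ.mem_nhds hp)).differentiableAt (by simp)).hasFDerivAt
  have hd1 : HasFDerivAt F1 (fderiv ℝ F1 (x, t)) (x, t) :=
    ((hF1.contDiffAt (hΩ.mem_nhds hp)).differentiableAt (by simp)).hasFDerivAt
  have hdH : HasFDerivAt H (fderiv ℝ F3 (x, t) +
      (3 / 2 : ℝ) • (F1 (x, t) • fderiv ℝ F1 (x, t) + F1 (x, t) • fderiv ℝ F1 (x, t)))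
      (x, t) := hd3.add ((hd1.mul hd1).const_mul (3 / 2 : ℝ))
  have hHval : fderiv ℝ H (x, t) (1, 0)
      = F4 (x, t) + 3 * F1 (x, t) * F2 (x, t) := by
    rw [hdH.fderiv]
    simp only [ContinuousLinearMap.add_apply, ContinuousLinearMap.smul_apply, smul_eq_mul]
    rw [hF4def, hF2def]
    ring
  -- now assemble
  have lhs : pdt u x t = 3 * fderiv ℝ H (x, t) (1, 0) := by
    rw [hut, hmix, hsymm, hagree.fderiv_eq]
  have hx3 : pdx^[3] u x t = 3 * pdx (pdx (pdx (pdx v))) x t := hux3 x t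
  have hx4 : pdx (pdx (pdx (pdx v))) x t = F4 (x, t) := by
    rw [hF4def]
    exact pdx_eq_fderiv hΩ hF3 e3 hp
  show pdt u x t = pdx^[3] u x t + u x t * pdx u x t
  rw [lhs, hHval, hx3, hx4, hu x t, hux x t,
    show pdx v x t = F1 (x, t) from e1 _ hp,
    show pdx (pdx v) x t = F2 (x, t) from e2 _ hp]
  ring
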